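/- arXiv:1901.06418 — 3 statements merged into one kernel-verified Lean document; each statement's English description precedes it below -/
import Mathlib

section
/- Let 𝒟 ∈ ℝ^{n×n} be invertible with inverse 𝒳 = 𝒟^{-1}. Let U ⊆ [n] with |U| = u, and partition 𝒳 = [𝒳_U, 𝒳_{-U}] (columns indexed by U and its complement) and 𝒟 into rows 𝒟_U and 𝒟_{-U}. Then the Moore-Penrose pseudoinverse of 𝒟_{-U} ∈ ℝ^{(n-u)×n} is given by 𝒟_{-U}^+ = A_U 𝒳_{-U}, where A_U = I_n − 𝒳_U(𝒳_U'𝒳_U)^{-1}𝒳_U' is the orthogonal antiprojection onto the column span of 𝒳_U. -/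
/-!
Write `A = 1 - X_U (X_Uᵀ X_U)⁻¹ X_Uᵀ`. The blocks of `D X = 1` give `D_{-U} X_{-U} = 1` and
`D_{-U} X_U = 0`, so `D_{-U} (A X_{-U}) = 1`: `A X_{-U}` is a right inverse. The column-row
expansion of `X D = 1` gives `X_{-U} D_{-U} = 1 - X_U D_U`, and since `A X_U = 0` this yields
`A X_{-U} D_{-U} = A`, which is symmetric. A right inverse `G` of `M` with `G M` symmetric
satisfies all four Moore–Penrose equations.
-/

open Matrix

namespace Matrix

variable {l m n k R : Type*} [Fintype n] [CommRing R]

def IsMoorePenroseInverse [Fintype m] (M : Matrix m n R) (G : Matrix n m R) : Prop :=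
  M * G * M = M ∧ G * M * G = G ∧ (M * G)ᵀ = M * G ∧ (G * M)ᵀ = G * M

theorem isMoorePenroseInverse_of_mul_eq_one [Fintype m] [DecidableEq m]
    {M : Matrix m n R} {G : Matrix n m R} (hMG : M * G = 1) (hGM : (G * M)ᵀ = G * M) :
    IsMoorePenroseInverse M G :=
  ⟨by rw [hMG, Matrix.one_mul], by rw [Matrix.mul_assoc, hMG, Matrix.mul_one],
    by rw [hMG, transpose_one], hGM⟩

section Antiprojection

variable [DecidableEq n] [Fintype k] [DecidableEq k]

noncomputable def antiprojection (B : Matrix n k R) : Matrix n n R :=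
  1 - B * (Bᵀ * B)⁻¹ * Bᵀ

theorem transpose_antiprojection (B : Matrix n k R) :
    (antiprojection B)ᵀ = antiprojection B := by
  simp only [antiprojection, transpose_sub, transpose_one, transpose_mul, transpose_transpose,
    transpose_nonsing_inv, Matrix.mul_assoc]

theorem antiprojection_mul_self {B : Matrix n k R} (hB : IsUnit (Bᵀ * B)) :
    antiprojection B * B = 0 := by
  rw [antiprojection, Matrix.sub_mul, Matrix.one_mul, Matrix.mul_assoc, Matrix.mul_assoc,
    nonsing_inv_mul _ ((isUnit_iff_isUnit_det _).mp hB), Matrix.mul_one, sub_self]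

end Antiprojection

theorem submatrix_mul_add_submatrix_mul [DecidableEq n] (U : Finset n)
    (A : Matrix l n R) (B : Matrix n m R) :
    -- without the ascriptions `*` elaborates to the `CStarMatrix` multiplication
    (A.submatrix id (↑) : Matrix l U R) * (B.submatrix (↑) id : Matrix U m R) +
        (A.submatrix id (↑) : Matrix l {i // i ∉ U} R) *
          (B.submatrix (↑) id : Matrix {i // i ∉ U} m R) =
      A * B := by
  ext i j
  simp only [add_apply, mul_apply, submatrix_apply, id]
  rw [Finset.sum_coe_sort U fun x => A i x * B x j,
    ← Finset.sum_subtype Uᶜ (fun _ => Finset.mem_compl) fun x => A i x * B x j,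
    Finset.sum_add_sum_compl]

theorem isMoorePenroseInverse_antiprojection_mul [DecidableEq n] [Fintype m] [DecidableEq m]
    [Fintype k] [DecidableEq k] {M : Matrix m n R} {G : Matrix n m R} {B : Matrix n k R}
    {C : Matrix k n R}
    (hMG : M * G = 1) (hMB : M * B = 0) (hsplit : B * C + G * M = 1) (hB : IsUnit (Bᵀ * B)) :
    IsMoorePenroseInverse M (antiprojection B * G) := by
  refine isMoorePenroseInverse_of_mul_eq_one ?_ ?_
  · calc M * (antiprojection B * G) = M * G - M * B * ((Bᵀ * B)⁻¹ * Bᵀ * G) := by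
          simp only [antiprojection, Matrix.sub_mul, Matrix.mul_sub, Matrix.one_mul,
            Matrix.mul_assoc]
      _ = 1 := by rw [hMG, hMB, Matrix.zero_mul, sub_zero]
  · have hGM : G * M = 1 - B * C := eq_sub_of_add_eq' hsplit
    rw [Matrix.mul_assoc, hGM, Matrix.mul_sub, Matrix.mul_one, ← Matrix.mul_assoc,
      antiprojection_mul_self hB, Matrix.zero_mul, sub_zero, transpose_antiprojection]

end Matrix

/-- Moore–Penrose pseudoinverse via matrix inversion: if `D` is invertible with
inverse `X`, `Dm` is the submatrix of rows of `D` outside `U`, `XU` and `Xm`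
are the submatrices of columns of `X` inside and outside `U`, and
`AU = I − XU (XUᵀ XU)⁻¹ XUᵀ`, then `AU * Xm` satisfies the four Moore–Penrose
equations for `Dm`, i.e. it is the Moore–Penrose pseudoinverse of `Dm`. -/
theorem moore_penrose_of_inverse
    (n : ℕ) (D X : Matrix (Fin n) (Fin n) ℝ)
    (hDX : D * X = 1) (hXD : X * D = 1)
    (U : Finset (Fin n))
    (Dm : Matrix {i : Fin n // i ∉ U} (Fin n) ℝ)
    (hDm : ∀ (i : {i : Fin n // i ∉ U}) (j : Fin n), Dm i j = D i.1 j)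
    (XU : Matrix (Fin n) {i : Fin n // i ∈ U} ℝ)
    (hXU : ∀ (i : Fin n) (j : {i : Fin n // i ∈ U}), XU i j = X i j.1)
    (Xm : Matrix (Fin n) {i : Fin n // i ∉ U} ℝ)
    (hXm : ∀ (i : Fin n) (j : {i : Fin n // i ∉ U}), Xm i j = X i j.1)
    (hinv : IsUnit (XUᵀ * XU))
    (AU : Matrix (Fin n) (Fin n) ℝ)
    (hAU : AU = 1 - XU * (XUᵀ * XU)⁻¹ * XUᵀ) :
    Dm * (AU * Xm) * Dm = Dm ∧
    (AU * Xm) * Dm * (AU * Xm) = AU * Xm ∧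
    (Dm * (AU * Xm))ᵀ = Dm * (AU * Xm) ∧
    ((AU * Xm) * Dm)ᵀ = (AU * Xm) * Dm := by
  obtain rfl : Dm = D.submatrix (↑) id := Matrix.ext hDm
  obtain rfl : XU = X.submatrix id (↑) := Matrix.ext hXU
  obtain rfl : Xm = X.submatrix id (↑) := Matrix.ext hXm
  subst hAU
  refine isMoorePenroseInverse_antiprojection_mul (C := D.submatrix (↑) id) ?_ ?_ ?_ hinv
  · rw [← submatrix_mul _ _ _ _ _ Function.bijective_id, hDX]
    exact submatrix_one _ Subtype.val_injective
  · rw [← submatrix_mul _ _ _ _ _ Function.bijective_id, hDX]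
    exact toBlock_one_disjoint disjoint_compl_left
  · exact (submatrix_mul_add_submatrix_mul U X D).trans hXD
end

section
/- Let D³ ∈ ℝ^{(n-3)×n} be the third-order difference matrix with (D³)_{i,i} = −1, (D³)_{i,i+1} = 3, (D³)_{i,i+2} = −3, (D³)_{i,i+3} = 1 and all other entries 0. Let B ∈ ℝ^{n×n} be obtained by stacking the three rows (1,0,0,…,0), (−1,1,0,…,0), (1,−2,1,0,…,0) on top of D³. Then B is invertible and its inverse V satisfies: V_{i1} = 1, V_{i2} = i − 1, and for j ≥ 3, V_{ij} = (i−j+1)(i−j+2)/2 if j ≤ i and 0 otherwise. -/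
open Matrix

private lemma ind_sum {n : ℕ} (f : Fin n → ℝ) (a : Fin n) :
    ∑ k : Fin n, (if k = a then f k else 0) = f a := by
  simp

/-- Third-order total variation on the path graph: stacking the rows
`(1,0,…,0)`, `(−1,1,0,…,0)`, `(1,−2,1,0,…,0)` on top of the third-order
difference matrix gives an invertible matrix whose inverse has first column all
ones, second column `i − 1` (1-indexed) and entries `(i−j+1)(i−j+2)/2` for
`j ≥ 3`, `j ≤ i`, zero otherwise. -/
theorem path_graph_third_order_inverse
    (n : ℕ) (hn : 4 ≤ n) (B V : Matrix (Fin n) (Fin n) ℝ)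
    (hB0 : ∀ i j : Fin n, i.1 = 0 → B i j = if j.1 = 0 then 1 else 0)
    (hB1 : ∀ i j : Fin n, i.1 = 1 →
      B i j = if j.1 = 0 then -1 else if j.1 = 1 then 1 else 0)
    (hB2 : ∀ i j : Fin n, i.1 = 2 →
      B i j = if j.1 = 0 then 1 else if j.1 = 1 then -2
        else if j.1 = 2 then 1 else 0)
    (hB : ∀ i j : Fin n, 3 ≤ i.1 →
      B i j = if j.1 = i.1 - 3 then -1 else if j.1 = i.1 - 2 then 3
        else if j.1 = i.1 - 1 then -3 else if j.1 = i.1 then 1 else 0)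
    (hV0 : ∀ i j : Fin n, j.1 = 0 → V i j = 1)
    (hV1 : ∀ i j : Fin n, j.1 = 1 → V i j = (i.1 : ℝ))
    (hV : ∀ i j : Fin n, 2 ≤ j.1 →
      V i j = if j ≤ i then ((i.1 : ℝ) - j.1 + 1) * ((i.1 : ℝ) - j.1 + 2) / 2
        else 0) :
    B * V = 1 ∧ V * B = 1 := by
  have hBV : B * V = 1 := by
    ext i j
    rw [Matrix.mul_apply, Matrix.one_apply]
    by_cases h0 : i.1 = 0
    · -- row 0
      have key : ∀ k : Fin n, B i k * V k j = if k = i then V k j else 0 := by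
        intro k
        rw [hB0 i k h0]
        by_cases hk : k = i
        · simp [hk, h0]
        · have : k.1 ≠ 0 := fun h => hk (Fin.ext (by omega))
          simp [this, hk]
      rw [Finset.sum_congr rfl (fun k _ => key k), ind_sum]
      by_cases hij : i = j
      · rw [if_pos hij, hij, hV0 j j (hij ▸ h0)]
      · rw [if_neg hij]
        have hj0 : j.1 ≠ 0 := fun h => hij (Fin.ext (by omega))
        by_cases hj1 : j.1 = 1
        · rw [hV1 i j hj1, h0]; norm_num
        · rw [hV i j (by omega)]
          have : ¬ j ≤ i := by rw [Fin.le_def]; omega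
          rw [if_neg this]
    · by_cases h1 : i.1 = 1
      · -- row 1
        set a : Fin n := ⟨0, by omega⟩ with ha
        have key : ∀ k : Fin n, B i k * V k j =
            (if k = a then (-1) * V k j else 0) + (if k = i then 1 * V k j else 0) := by
          intro k
          rw [hB1 i k h1]
          have ea : (k = a) ↔ k.1 = 0 := by rw [ha]; exact Fin.ext_iff
          have ed : (k = i) ↔ k.1 = 1 := by rw [Fin.ext_iff, h1]
          simp only [ea, ed]
          split_ifs <;> first | omega | ring
        rw [Finset.sum_congr rfl (fun k _ => key k), Finset.sum_add_distrib,
          ind_sum, ind_sum]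
        by_cases hj0 : j.1 = 0
        · rw [hV0 a j hj0, hV0 i j hj0, if_neg (fun h : i = j => by
            rw [h] at h1; omega)]
          ring
        · by_cases hj1 : j.1 = 1
          · rw [hV1 a j hj1, hV1 i j hj1, if_pos (Fin.ext (by omega)), h1]
            norm_num
          · rw [hV a j (by omega), hV i j (by omega),
              if_neg (show ¬ j ≤ a by rw [Fin.le_def]; simp [ha]; omega),
              if_neg (show ¬ j ≤ i by rw [Fin.le_def]; omega),
              if_neg (fun h : i = j => by rw [h] at h1; omega)]
            ring
      · by_cases h2 : i.1 = 2
        · -- row 2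
          set a : Fin n := ⟨0, by omega⟩ with ha
          set b : Fin n := ⟨1, by omega⟩ with hb
          have key : ∀ k : Fin n, B i k * V k j =
              (if k = a then 1 * V k j else 0) + (if k = b then (-2) * V k j else 0)
                + (if k = i then 1 * V k j else 0) := by
            intro k
            rw [hB2 i k h2]
            have ea : (k = a) ↔ k.1 = 0 := by rw [ha]; exact Fin.ext_iff
            have eb : (k = b) ↔ k.1 = 1 := by rw [hb]; exact Fin.ext_iff
            have ed : (k = i) ↔ k.1 = 2 := by rw [Fin.ext_iff, h2]
            simp only [ea, eb, ed]
            split_ifs <;> first | omega | ring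
          rw [Finset.sum_congr rfl (fun k _ => key k), Finset.sum_add_distrib,
            Finset.sum_add_distrib, ind_sum, ind_sum, ind_sum]
          by_cases hj0 : j.1 = 0
          · rw [hV0 a j hj0, hV0 b j hj0, hV0 i j hj0,
              if_neg (fun h : i = j => by rw [h] at h2; omega)]
            ring
          · by_cases hj1 : j.1 = 1
            · rw [hV1 a j hj1, hV1 b j hj1, hV1 i j hj1,
                if_neg (fun h : i = j => by rw [h] at h2; omega), ha, hb, h2]
              norm_num
            · rw [hV a j (by omega), hV b j (by omega), hV i j (by omega),
                if_neg (show ¬ j ≤ a by rw [Fin.le_def]; simp [ha]; omega),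
                if_neg (show ¬ j ≤ b by rw [Fin.le_def]; simp [hb]; omega)]
              by_cases hj2 : j.1 = 2
              · rw [if_pos (show j ≤ i by rw [Fin.le_def]; omega),
                  if_pos (Fin.ext (by omega) : i = j), h2, hj2]
                norm_num
              · rw [if_neg (show ¬ j ≤ i by rw [Fin.le_def]; omega),
                  if_neg (fun h : i = j => by rw [h] at h2; omega)]
                ring
        · -- rows ≥ 3
          have hi3 : 3 ≤ i.1 := by omega
          set a : Fin n := ⟨i.1 - 3, by omega⟩ with ha
          set b : Fin n := ⟨i.1 - 2, by omega⟩ with hb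
          set c : Fin n := ⟨i.1 - 1, by omega⟩ with hc
          have key : ∀ k : Fin n, B i k * V k j =
              (if k = a then (-1) * V k j else 0) + (if k = b then 3 * V k j else 0)
                + (if k = c then (-3) * V k j else 0) + (if k = i then 1 * V k j else 0) := by
            intro k
            rw [hB i k hi3]
            have ea : (k = a) ↔ k.1 = i.1 - 3 := by rw [ha]; exact Fin.ext_iff
            have eb : (k = b) ↔ k.1 = i.1 - 2 := by rw [hb]; exact Fin.ext_iff
            have ec : (k = c) ↔ k.1 = i.1 - 1 := by rw [hc]; exact Fin.ext_iff
            have ed : (k = i) ↔ k.1 = i.1 := by rw [Fin.ext_iff]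
            simp only [ea, eb, ec, ed]
            split_ifs <;> first | omega | ring
          rw [Finset.sum_congr rfl (fun k _ => key k), Finset.sum_add_distrib,
            Finset.sum_add_distrib, Finset.sum_add_distrib, ind_sum, ind_sum, ind_sum, ind_sum]
          have ca : ((i.1 - 3 : ℕ) : ℝ) = (i.1 : ℝ) - 3 := by
            rw [Nat.cast_sub hi3]; norm_num
          have cb : ((i.1 - 2 : ℕ) : ℝ) = (i.1 : ℝ) - 2 := by
            rw [Nat.cast_sub (by omega)]; norm_num
          have cc : ((i.1 - 1 : ℕ) : ℝ) = (i.1 : ℝ) - 1 := by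
            rw [Nat.cast_sub (by omega)]; norm_num
          by_cases hj0 : j.1 = 0
          · rw [hV0 a j hj0, hV0 b j hj0, hV0 c j hj0, hV0 i j hj0,
              if_neg (fun h : i = j => by rw [h] at hi3; omega)]
            ring
          · by_cases hj1 : j.1 = 1
            · rw [hV1 a j hj1, hV1 b j hj1, hV1 c j hj1, hV1 i j hj1,
                if_neg (fun h : i = j => by rw [h] at hi3; omega), ha, hb, hc]
              simp only []
              rw [ca, cb, cc]
              ring
            · have hj2 : 2 ≤ j.1 := by omega
              rw [hV a j hj2, hV b j hj2, hV c j hj2, hV i j hj2]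
              have hcase : j.1 ≤ i.1 - 3 ∨ j.1 = i.1 - 2 ∨ j.1 = i.1 - 1 ∨ j.1 = i.1
                  ∨ i.1 < j.1 := by omega
              have hne : j.1 ≠ i.1 → (if i = j then (1:ℝ) else 0) = 0 := fun h =>
                if_neg (fun hh : i = j => h (by rw [hh]))
              rcases hcase with h | h | h | h | h
              · rw [if_pos (show j ≤ a by rw [Fin.le_def]; simpa [ha] using h),
                  if_pos (show j ≤ b by rw [Fin.le_def]; simp [hb]; omega),
                  if_pos (show j ≤ c by rw [Fin.le_def]; simp [hc]; omega),
                  if_pos (show j ≤ i by rw [Fin.le_def]; omega),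
                  hne (by omega), ha, hb, hc]
                simp only []
                rw [ca, cb, cc]
                ring
              · have hjr : (j.1 : ℝ) = (i.1 : ℝ) - 2 := by
                  have : j.1 + 2 = i.1 := by omega
                  have := congrArg (fun m : ℕ => (m : ℝ)) this
                  push_cast at this; linarith
                rw [if_neg (show ¬ j ≤ a by rw [Fin.le_def]; simp [ha]; omega),
                  if_pos (show j ≤ b by rw [Fin.le_def]; simp [hb]; omega),
                  if_pos (show j ≤ c by rw [Fin.le_def]; simp [hc]; omega),
                  if_pos (show j ≤ i by rw [Fin.le_def]; omega),
                  hne (by omega), hb, hc]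
                simp only []
                rw [cb, cc, hjr]
                ring
              · have hjr : (j.1 : ℝ) = (i.1 : ℝ) - 1 := by
                  have : j.1 + 1 = i.1 := by omega
                  have := congrArg (fun m : ℕ => (m : ℝ)) this
                  push_cast at this; linarith
                rw [if_neg (show ¬ j ≤ a by rw [Fin.le_def]; simp [ha]; omega),
                  if_neg (show ¬ j ≤ b by rw [Fin.le_def]; simp [hb]; omega),
                  if_pos (show j ≤ c by rw [Fin.le_def]; simp [hc]; omega),
                  if_pos (show j ≤ i by rw [Fin.le_def]; omega),
                  hne (by omega), hc]
                simp only []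
                rw [cc, hjr]
                ring
              · have hjr : ((j.1 : ℕ) : ℝ) = ((i.1 : ℕ) : ℝ) := by rw [h]
                rw [if_neg (show ¬ j ≤ a by rw [Fin.le_def]; simp [ha]; omega),
                  if_neg (show ¬ j ≤ b by rw [Fin.le_def]; simp [hb]; omega),
                  if_neg (show ¬ j ≤ c by rw [Fin.le_def]; simp [hc]; omega),
                  if_pos (show j ≤ i by rw [Fin.le_def]; omega),
                  if_pos (Fin.ext h.symm : i = j), hjr]
                ring
              · rw [if_neg (show ¬ j ≤ a by rw [Fin.le_def]; simp [ha]; omega),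
                  if_neg (show ¬ j ≤ b by rw [Fin.le_def]; simp [hb]; omega),
                  if_neg (show ¬ j ≤ c by rw [Fin.le_def]; simp [hc]; omega),
                  if_neg (show ¬ j ≤ i by rw [Fin.le_def]; omega),
                  hne (by omega)]
                ring
  exact ⟨hBV, mul_eq_one_comm.mp hBV⟩
end

section
/- Let D ∈ ℝ^{(n-1)×n} be the incidence matrix of a tree graph on n vertices rooted at vertex 1, and let B ∈ ℝ^{n×n} be D with the row (1,0,…,0) stacked on top. Then B is invertible, the first column of B^{-1} is the all-ones vector 1_n, and for each i ∈ {2,…,n}, the i-th column of B^{-1} is the 0/1-indicator vector of the connected component not containing vertex 1 of the graph obtained by deleting edge e_{i-1}. -/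
open Matrix

private lemma reach_ind' {V : Type*} {G : SimpleGraph V} {P : V → Prop}
    (hP : ∀ a b, G.Adj a b → P a → P b) {u v : V} (h : G.Reachable u v) : P u → P v := by
  obtain ⟨w⟩ := h
  induction w with
  | nil => exact id
  | cons h p ih => exact fun hu => ih (hP _ _ h hu)

open scoped Classical in
/-- Tree graphs: for a tree on `n + 1` vertices rooted at vertex `0` with
directed edges `e ↦ (tail e, head e)`, stacking the row `(1,0,…,0)` on top of
the incidence matrix gives an invertible matrix `B`; the first column of `B⁻¹`
is the all-ones vector, and for each edge `e` the `(e+1)`-th column of `B⁻¹` is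
the 0/1 indicator of the connected component not containing the root in the
graph with edge `e` deleted (negated if the edge points towards the root's
component). -/
theorem tree_graph_inverse_columns
    (n : ℕ) (tail head : Fin n → Fin (n + 1))
    (hloop : ∀ e, tail e ≠ head e)
    (hdistinct : ∀ e e' : Fin n,
      ((tail e = tail e' ∧ head e = head e') ∨
        (tail e = head e' ∧ head e = tail e')) → e = e')
    (hconn : (SimpleGraph.fromRel
      (fun a b => ∃ e, tail e = a ∧ head e = b)).Connected)
    (D : Matrix (Fin n) (Fin (n + 1)) ℝ)
    (hD : ∀ (e : Fin n) (v : Fin (n + 1)),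
      D e v = if v = head e then 1 else if v = tail e then -1 else 0)
    (B : Matrix (Fin (n + 1)) (Fin (n + 1)) ℝ)
    (hB0 : ∀ v : Fin (n + 1), B 0 v = if v = 0 then 1 else 0)
    (hBe : ∀ (e : Fin n) (v : Fin (n + 1)), B e.succ v = D e v) :
    IsUnit B ∧
    (∀ v : Fin (n + 1), B⁻¹ v 0 = 1) ∧
    (∀ (e : Fin n) (v : Fin (n + 1)),
      B⁻¹ v e.succ =
        if (SimpleGraph.fromRel
            (fun a b => ∃ e', e' ≠ e ∧ tail e' = a ∧ head e' = b)).Reachable 0 v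
        then 0
        else if (SimpleGraph.fromRel
            (fun a b => ∃ e', e' ≠ e ∧ tail e' = a ∧ head e' = b)).Reachable 0
              (head e)
        then -1 else 1) := by
  classical
  set G : SimpleGraph (Fin (n + 1)) :=
    SimpleGraph.fromRel (fun a b => ∃ e, tail e = a ∧ head e = b) with hGdef
  let Gd : Fin n → SimpleGraph (Fin (n + 1)) := fun e =>
    SimpleGraph.fromRel (fun a b => ∃ e', e' ≠ e ∧ tail e' = a ∧ head e' = b)
  -- L1 : decompose adjacency in G
  have L1 : ∀ (e : Fin n) a b, G.Adj a b →
      (Gd e).Adj a b ∨ (a = tail e ∧ b = head e) ∨ (a = head e ∧ b = tail e) := by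
    intro e a b hab
    rw [hGdef, SimpleGraph.fromRel_adj] at hab
    obtain ⟨hne, ⟨e', h1, h2⟩ | ⟨e', h1, h2⟩⟩ := hab
    · by_cases hee : e' = e
      · subst hee; exact Or.inr (Or.inl ⟨h1.symm, h2.symm⟩)
      · exact Or.inl ((SimpleGraph.fromRel_adj _ a b).2 ⟨hne, Or.inl ⟨e', hee, h1, h2⟩⟩)
    · by_cases hee : e' = e
      · subst hee; exact Or.inr (Or.inr ⟨h2.symm, h1.symm⟩)
      · exact Or.inl ((SimpleGraph.fromRel_adj _ a b).2 ⟨hne, Or.inr ⟨e', hee, h1, h2⟩⟩)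
  have Ladj : ∀ (e e' : Fin n), e' ≠ e → (Gd e).Adj (tail e') (head e') := by
    intro e e' h
    exact (SimpleGraph.fromRel_adj _ _ _).2 ⟨hloop e', Or.inl ⟨e', h, rfl, rfl⟩⟩
  -- L2 : at least one endpoint of e is reachable from 0 after deleting e
  have L2 : ∀ e : Fin n, (Gd e).Reachable 0 (head e) ∨ (Gd e).Reachable 0 (tail e) := by
    intro e
    by_contra hcon
    push_neg at hcon
    obtain ⟨hh, ht⟩ := hcon
    refine hh (reach_ind' (G := G) (P := fun v => (Gd e).Reachable 0 v) ?_
      (hconn.preconnected 0 (head e)) (SimpleGraph.Reachable.refl 0))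
    intro a b hab ha
    rcases L1 e a b hab with h | ⟨h1, h2⟩ | ⟨h1, h2⟩
    · exact ha.trans h.reachable
    · exact absurd (h1 ▸ ha) ht
    · exact absurd (h1 ▸ ha) hh
  -- L4 : not both endpoints reachable
  have L4 : ∀ e : Fin n,
      ¬((Gd e).Reachable 0 (head e) ∧ (Gd e).Reachable 0 (tail e)) := by
    rintro e ⟨hh, ht⟩
    have hall : ∀ v, (Gd e).Reachable 0 v := by
      intro v
      refine reach_ind' (G := G) (P := fun v => (Gd e).Reachable 0 v) ?_
        (hconn.preconnected 0 v) (SimpleGraph.Reachable.refl 0)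
      intro a b hab ha
      rcases L1 e a b hab with h | ⟨h1, h2⟩ | ⟨h1, h2⟩
      · exact ha.trans h.reachable
      · exact h2 ▸ hh
      · exact h2 ▸ ht
    let f : (Fin (n + 1) → ℝ) →ₗ[ℝ] (Fin n → ℝ) :=
      { toFun := fun x j => if j = e then x 0 else x (head j) - x (tail j)
        map_add' := by
          intro x y; funext j; by_cases h : j = e <;> simp [h] <;> ring
        map_smul' := by
          intro c x; funext j; by_cases h : j = e <;> simp [h] <;> ring }
    have hinj : Function.Injective f := by
      refine (injective_iff_map_eq_zero f).2 ?_
      intro x hx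
      have hx0 : x 0 = 0 := by
        have := congrFun hx e
        simpa [f] using this
      have hedge : ∀ j : Fin n, j ≠ e → x (head j) = x (tail j) := by
        intro j hj
        have := congrFun hx j
        simp [f, hj, sub_eq_zero] at this
        exact this
      funext v
      show x v = 0
      refine reach_ind' (G := Gd e) (P := fun v => x v = 0) ?_ (hall v) hx0
      intro a b hab ha
      obtain ⟨hne, ⟨e', he', h1, h2⟩ | ⟨e', he', h1, h2⟩⟩ :=
        (SimpleGraph.fromRel_adj _ a b).1 hab
      · rw [← h2, hedge e' he', h1]; exact ha
      · rw [← h1, ← hedge e' he', h2]; exact ha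
    have hle := LinearMap.finrank_le_finrank_of_injective hinj
    simp [Module.finrank_fintype_fun_eq_card] at hle
  -- candidate inverse
  set C : Matrix (Fin (n + 1)) (Fin (n + 1)) ℝ := Matrix.of fun v w =>
    Fin.cases 1 (fun e => if (Gd e).Reachable 0 v then 0
      else if (Gd e).Reachable 0 (head e) then -1 else 1) w with hCdef
  have hC0 : ∀ v, C v 0 = 1 := by intro v; simp [hCdef]
  have hCs : ∀ v (e : Fin n), C v e.succ =
      if (Gd e).Reachable 0 v then 0
      else if (Gd e).Reachable 0 (head e) then -1 else 1 := by
    intro v e; simp [hCdef]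
  have hBC : B * C = 1 := by
    ext u w
    induction u using Fin.cases with
    | zero =>
      rw [Matrix.mul_apply]
      have hterm : ∀ v, B 0 v * C v w = if v = 0 then C 0 w else 0 := by
        intro v; rw [hB0]; split_ifs with h <;> simp [h]
      rw [Finset.sum_congr rfl fun v _ => hterm v]
      rw [Finset.sum_ite_eq' Finset.univ (0 : Fin (n + 1)) (fun v => C 0 w)]
      simp only [Finset.mem_univ, if_true, Matrix.one_apply]
      induction w using Fin.cases with
      | zero => simp [hC0]
      | succ e =>
        rw [hCs, if_pos (SimpleGraph.Reachable.refl 0),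
          if_neg (Fin.succ_ne_zero e).symm]
    | succ e =>
      rw [Matrix.mul_apply]
      have hht : head e ≠ tail e := fun h => hloop e h.symm
      have hterm : ∀ v, B e.succ v * C v w =
          (if v = head e then C (head e) w else 0) +
          (if v = tail e then -C (tail e) w else 0) := by
        intro v; rw [hBe, hD]
        by_cases h1 : v = head e
        · subst h1; simp [hht]
        · by_cases h2 : v = tail e
          · subst h2; simp [h1]
          · simp [h1, h2]
      rw [Finset.sum_congr rfl fun v _ => hterm v, Finset.sum_add_distrib,
        Finset.sum_ite_eq' Finset.univ (head e) (fun _ => C (head e) w),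
        Finset.sum_ite_eq' Finset.univ (tail e) (fun _ => -C (tail e) w)]
      simp only [Finset.mem_univ, if_true, Matrix.one_apply]
      induction w using Fin.cases with
      | zero => rw [hC0, hC0, if_neg (Fin.succ_ne_zero e)]; ring
      | succ e' =>
        rw [hCs, hCs]
        by_cases hee : e = e'
        · subst hee
          rw [if_pos rfl]
          rcases L2 e with hh | ht
          · have hnt : ¬(Gd e).Reachable 0 (tail e) := fun ht => L4 e ⟨hh, ht⟩
            rw [if_pos hh, if_neg hnt, if_pos hh]; ring
          · have hnh : ¬(Gd e).Reachable 0 (head e) := fun hh => L4 e ⟨hh, ht⟩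
            rw [if_neg hnh, if_neg hnh, if_pos ht]; ring
        · have hadj : (Gd e').Adj (tail e) (head e) := Ladj e' e hee
          have hiff : (Gd e').Reachable 0 (head e) ↔ (Gd e').Reachable 0 (tail e) :=
            ⟨fun h => h.trans hadj.reachable.symm, fun h => h.trans hadj.reachable⟩
          rw [if_neg (fun h => hee (Fin.succ_injective n h))]
          by_cases hh : (Gd e').Reachable 0 (head e)
          · rw [if_pos hh, if_pos (hiff.1 hh)]; ring
          · rw [if_neg hh, if_neg (fun ht => hh (hiff.2 ht))]; ring
  refine ⟨(Matrix.isUnit_iff_isUnit_det B).2 (Matrix.isUnit_det_of_right_inverse hBC),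
    ?_, ?_⟩
  · intro v; rw [Matrix.inv_eq_right_inv hBC]; exact hC0 v
  · intro e v; rw [Matrix.inv_eq_right_inv hBC]; exact hCs v e
end
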